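/- arXiv:0707.0850 — 2 statements merged into one kernel-verified Lean document; each statement's English description precedes it below -/
import Mathlib

section
/- Let B and C be complex 2m×2m matrices and suppose the 2m×4m block matrix (B C) has full rank 2m (i.e., the boundary conditions By₁ + Cy₂ = 0 are linearly independent). Suppose there exists a 2m×2m matrix A such that for all vectors x, y₁, y₂ ∈ ℂ^{2m} with x ∈ B⁻¹(im C) and By₁ + Cy₂ = 0 one has ⟨y₂, x⟩ = ⟨A y₁, x⟩. Then B⁻¹(im C) = (ker C)^⊥, where B⁻¹(im C) denotes the full preimage of im C under B. -/
/-!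
Taking `y₁ = 0` in the hypothesis shows that `B⁻¹(im C)` is orthogonal to `ker C`. For the
reverse inclusion it suffices to compare dimensions: full rank of `(B C)` means
`im B + im C = ℂ^{2m}`, so `B` induces a surjection of `ℂ^{2m}` onto `ℂ^{2m} / im C` with
kernel `B⁻¹(im C)`, whence `dim B⁻¹(im C) = rank C = dim (ker C)ᗮ`.
-/

open Matrix

theorem Submodule.finrank_comap_add_finrank_of_sup_eq_top {K V W : Type*} [Field K]
    [AddCommGroup V] [Module K V] [AddCommGroup W] [Module K W]
    [FiniteDimensional K V] [FiniteDimensional K W]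
    (f : V →ₗ[K] W) (q : Submodule K W) (hq : LinearMap.range f ⊔ q = ⊤) :
    Module.finrank K (q.comap f) + Module.finrank K W
      = Module.finrank K V + Module.finrank K q := by
  have hsurj : LinearMap.range (q.mkQ ∘ₗ f) = ⊤ := by
    rw [LinearMap.range_comp, Submodule.map_mkQ_eq_top, sup_comm, hq]
  have hker : LinearMap.ker (q.mkQ ∘ₗ f) = q.comap f := by
    rw [LinearMap.ker_comp, Submodule.ker_mkQ]
  have hrank_nullity := LinearMap.finrank_range_add_finrank_ker (q.mkQ ∘ₗ f)
  rw [hsurj, hker, finrank_top] at hrank_nullity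
  have hquot := q.finrank_quotient_add_finrank
  omega

theorem Matrix.mulVec_surjective_of_linearIndependent_row {K m n : Type*} [Field K]
    [Fintype m] [Fintype n] (M : Matrix m n K) (hM : LinearIndependent K M.row) :
    Function.Surjective M.mulVec := by
  have hrank : Module.finrank K (LinearMap.range M.mulVecLin) = Module.finrank K (m → K) := by
    rw [← Matrix.rank, rank_eq_finrank_span_row, finrank_span_eq_card hM,
      Module.finrank_fintype_fun_eq_card]
  exact LinearMap.range_eq_top.mp (Submodule.eq_top_of_finrank_eq hrank)

theorem LinearMap.finrank_range_eq_finrank_orthogonal_ker {𝕜 E F : Type*} [RCLike 𝕜]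
    [NormedAddCommGroup E] [InnerProductSpace 𝕜 E] [FiniteDimensional 𝕜 E]
    [AddCommGroup F] [Module 𝕜 F] (f : E →ₗ[𝕜] F) :
    Module.finrank 𝕜 (LinearMap.range f) = Module.finrank 𝕜 (LinearMap.ker f)ᗮ := by
  have hrank_nullity := f.finrank_range_add_finrank_ker
  have horth := (LinearMap.ker f).finrank_add_finrank_orthogonal
  omega

theorem stmt_0_general (m : ℕ)
    (B C A : Matrix (Fin (2 * m)) (Fin (2 * m)) ℂ)
    (hrank : LinearIndependent ℂ
      (fun i : Fin (2 * m) => (Sum.elim (B i) (C i) : Fin (2 * m) ⊕ Fin (2 * m) → ℂ)))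
    (hA : ∀ x y₁ y₂ : EuclideanSpace ℂ (Fin (2 * m)),
      x ∈ Submodule.comap (Matrix.toEuclideanLin B)
            (LinearMap.range (Matrix.toEuclideanLin C)) →
      Matrix.toEuclideanLin B y₁ + Matrix.toEuclideanLin C y₂ = 0 →
      (inner ℂ y₂ x : ℂ) = inner ℂ (Matrix.toEuclideanLin A y₁) x) :
    Submodule.comap (Matrix.toEuclideanLin B)
        (LinearMap.range (Matrix.toEuclideanLin C))
      = (LinearMap.ker (Matrix.toEuclideanLin C))ᗮ := by
  set f := Matrix.toEuclideanLin B
  set g := Matrix.toEuclideanLin C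
  have hle : (LinearMap.range g).comap f ≤ (LinearMap.ker g)ᗮ := by
    intro x hx
    refine (Submodule.mem_orthogonal _ x).mpr fun y hy => ?_
    simpa using hA x 0 y hx (by simpa using hy)
  have hsup : LinearMap.range f ⊔ LinearMap.range g = ⊤ := by
    refine Submodule.eq_top_iff'.mpr fun y => Submodule.mem_sup.mpr ?_
    obtain ⟨v, hv⟩ := (fromCols B C).mulVec_surjective_of_linearIndependent_row hrank y.ofLp
    refine ⟨f (WithLp.toLp 2 (v ∘ Sum.inl)), ⟨_, rfl⟩,
      g (WithLp.toLp 2 (v ∘ Sum.inr)), ⟨_, rfl⟩, ?_⟩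
    rw [fromCols_mulVec] at hv
    exact congrArg (WithLp.toLp 2) hv
  have hdim := Submodule.finrank_comap_add_finrank_of_sup_eq_top f _ hsup
  rw [add_comm, Nat.add_left_cancel_iff, g.finrank_range_eq_finrank_orthogonal_ker] at hdim
  exact Submodule.eq_of_le_of_finrank_le hle hdim.ge

/-- If (B C) has full rank 2m and there is a matrix A with
⟨y₂, x⟩ = ⟨A y₁, x⟩ for all x ∈ B⁻¹(im C) and all y₁, y₂ with By₁ + Cy₂ = 0,
then B⁻¹(im C) = (ker C)ᗮ. -/
theorem stmt_0 (m : ℕ) (hm : 0 < m)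
    (B C A : Matrix (Fin (2 * m)) (Fin (2 * m)) ℂ)
    (hrank : LinearIndependent ℂ
      (fun i : Fin (2 * m) => (Sum.elim (B i) (C i) : Fin (2 * m) ⊕ Fin (2 * m) → ℂ)))
    (hA : ∀ x y₁ y₂ : EuclideanSpace ℂ (Fin (2 * m)),
      x ∈ Submodule.comap (Matrix.toEuclideanLin B)
            (LinearMap.range (Matrix.toEuclideanLin C)) →
      Matrix.toEuclideanLin B y₁ + Matrix.toEuclideanLin C y₂ = 0 →
      (inner ℂ y₂ x : ℂ) = inner ℂ (Matrix.toEuclideanLin A y₁) x) :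
    Submodule.comap (Matrix.toEuclideanLin B)
        (LinearMap.range (Matrix.toEuclideanLin C))
      = (LinearMap.ker (Matrix.toEuclideanLin C))ᗮ :=
  stmt_0_general m B C A hrank hA
end

section
/- Consider the boundary conditions of the example: U₁(y) = −y'''(0) + y''(0) + y(0), U₂(y) = y'''(1) + y(1), U₃(y) = y'(0), U₄(y) = y'(1) for the fourth-order expression L y = y''''. Writing these in the quasi-derivative form B y^∧ + C y^∨ = 0 with y^∧ = (y(0), y'(0), y(1), y'(1))ᵗ and y^∨ = (y'''(0), y''(0), −y'''(1), −y''(1))ᵗ (quasi-derivatives reduce to ordinary derivatives since all lower-order coefficients vanish), the resulting matrices B and C satisfy B⁻¹(im C) ≠ ℂ⁴ ⊖ ker C. That is, the full preimage of im C under B does not equal the orthogonal complement of ker C. -/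
/-! The vector `e₀ = (1, 0, 0, 0)` lies in `B⁻¹(im C)`, since `B e₀ = e₀ = C (-e₀)`, but it is not
orthogonal to `(1, 1, 0, 0) ∈ ker C`. -/

theorem Submodule.ne_orthogonal_of_inner_ne_zero {𝕜 E : Type*} [RCLike 𝕜] [NormedAddCommGroup E]
    [InnerProductSpace 𝕜 E] {S K : Submodule 𝕜 E} {u v : E} (hv : v ∈ S) (hu : u ∈ K)
    (huv : inner 𝕜 u v ≠ 0) : S ≠ Kᗮ := by
  rintro rfl
  exact huv (Submodule.inner_right_of_mem_orthogonal hu hv)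

/-- For the example L y = y'''' with boundary conditions
−y'''(0)+y''(0)+y(0)=0, y'''(1)+y(1)=0, y'(0)=0, y'(1)=0, written as
B y^∧ + C y^∨ = 0 with y^∧ = (y(0), y'(0), y(1), y'(1))ᵗ and
y^∨ = (y'''(0), y''(0), −y'''(1), −y''(1))ᵗ, the matrices B and C satisfy
B⁻¹(im C) ≠ (ker C)ᗮ, i.e. the operator is not completely regular. -/
theorem stmt_8
    (B C : Matrix (Fin 4) (Fin 4) ℂ)
    (hB : B = !![1, 0, 0, 0;
                 0, 0, 1, 0;
                 0, 1, 0, 0;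
                 0, 0, 0, 1])
    (hC : C = !![-1, 1, 0, 0;
                 0, 0, -1, 0;
                 0, 0, 0, 0;
                 0, 0, 0, 0]) :
    Submodule.comap (Matrix.toEuclideanLin B)
        (LinearMap.range (Matrix.toEuclideanLin C))
      ≠ (LinearMap.ker (Matrix.toEuclideanLin C))ᗮ := by
  subst hB hC
  refine Submodule.ne_orthogonal_of_inner_ne_zero (u := !₂[1, 1, 0, 0]) (v := !₂[1, 0, 0, 0])
    ⟨!₂[-1, 0, 0, 0], ?_⟩ ?_ ?_
  · ext i
    fin_cases i <;> simp
  · ext i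
    fin_cases i <;> simp
  · simp [EuclideanSpace.inner_eq_star_dotProduct, dotProduct, Fin.sum_univ_four]
end
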